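/- For all λ > 0: (1) the ratio h ↦ f_{R₁}(h)/f_{H_V}(h) = (2λ²π²h³e^{−λπh²})/(4πλ^{3/2}h²e^{−λπh²}) is strictly increasing on (0,∞), and the ratio h ↦ f_{H_{I'}}(h)/f_{H_I}(h) = ((8/3)π²λ^{5/2}h⁴e^{−λπh²})/(4πλ^{3/2}h²e^{−λπh²}) is strictly increasing on (0,∞); (2) consequently, for all t ≥ 0, ∫_t^∞ 2λ²π²h³e^{−λπh²} dh ≥ ∫_t^∞ 4πλ^{3/2}h²e^{−λπh²} dh and ∫_t^∞ (8/3)π²λ^{5/2}h⁴e^{−λπh²} dh ≥ ∫_t^∞ 4πλ^{3/2}h²e^{−λπh²} dh. That is, H_V ≤_{lrd} R₁ and H_I ≤_{lrd} H_{I'}, and these likelihood-ratio dominations imply the stochastic dominations H_V ≤_{st} R₁ and H_I ≤_{st} H_{I'}. -/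

import Mathlib

/-!
On `(0, ∞)` each of the four functions is a density `A hⁿ e^{-λπh²}` of total mass one (the
constant is `A = 2 (λπ)^{(n+1)/2} / Γ((n+1)/2)`), so each likelihood ratio is a positive multiple
of a positive power of `h`, hence increasing. A monotone ratio `g / f` between densities of equal
mass gives domination of the tails: if `g t / f t ≤ 1` then `g ≤ f` on `(0, t]`, and the equal
masses move this inequality to the tails; otherwise `f ≤ g` on `(t, ∞)`.
-/

open MeasureTheory Set Real

theorem setIntegral_Ioi_le_of_monotoneOn_div {f g : ℝ → ℝ} {a t : ℝ}
    (hf : IntegrableOn f (Ioi a)) (hg : IntegrableOn g (Ioi a))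
    (hmass : ∫ x in Ioi a, f x = ∫ x in Ioi a, g x) (hf_pos : ∀ x ∈ Ioi a, 0 < f x)
    (hmono : MonotoneOn (fun x => g x / f x) (Ioi a)) (ht : a ≤ t) :
    ∫ x in Ioi t, f x ≤ ∫ x in Ioi t, g x := by
  rcases ht.eq_or_lt with rfl | hat
  · exact hmass.le
  rcases le_or_gt (g t / f t) 1 with hle | hgt
  · have hsplit (φ : ℝ → ℝ) (hφ : IntegrableOn φ (Ioi a)) :
        (∫ x in Ioc a t, φ x) + ∫ x in Ioi t, φ x = ∫ x in Ioi a, φ x := by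
      rw [← setIntegral_union Ioc_disjoint_Ioi_same measurableSet_Ioi
        (hφ.mono_set Ioc_subset_Ioi_self) (hφ.mono_set (Ioi_subset_Ioi ht)),
        Ioc_union_Ioi_eq_Ioi ht]
    have hIoc : ∫ x in Ioc a t, g x ≤ ∫ x in Ioc a t, f x :=
      setIntegral_mono_on (hg.mono_set Ioc_subset_Ioi_self) (hf.mono_set Ioc_subset_Ioi_self)
        measurableSet_Ioc fun x hx =>
          (div_le_one (hf_pos x hx.1)).1 ((hmono hx.1 hat hx.2).trans hle)
    linarith [hsplit f hf, hsplit g hg]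
  · refine setIntegral_mono_on (hf.mono_set (Ioi_subset_Ioi ht))
      (hg.mono_set (Ioi_subset_Ioi ht)) measurableSet_Ioi fun x hx => ?_
    have hxa : x ∈ Ioi a := hat.trans (mem_Ioi.1 hx)
    exact ((one_lt_div (hf_pos x hxa)).1 (hgt.trans_le (hmono hat hxa (le_of_lt hx)))).le

theorem strictMonoOn_mul_pow_div_mul_pow {A B : ℝ} (hA : 0 < A) (hB : 0 < B) {m n : ℕ}
    (hnm : n < m) (e : ℝ → ℝ) (he : ∀ x ∈ Ioi 0, e x ≠ 0) :
    StrictMonoOn (fun x => A * x ^ m * e x / (B * x ^ n * e x)) (Ioi 0) := by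
  have hratio (x : ℝ) (hx : x ∈ Ioi 0) :
      A * x ^ m * e x / (B * x ^ n * e x) = A / B * x ^ (m - n) := by
    have hex := he x hx
    have hx0 : x ≠ 0 := (mem_Ioi.1 hx).ne'
    rw [← pow_sub_mul_pow x hnm.le]
    field_simp
  intro x hx y hy hxy
  simp only [hratio x hx, hratio y hy]
  exact mul_lt_mul_of_pos_left (pow_lt_pow_left₀ hxy (le_of_lt hx) (by omega)) (div_pos hA hB)

theorem integrableOn_Ioi_mul_pow_mul_exp_neg_mul_sq (A : ℝ) {b : ℝ} (hb : 0 < b) (n : ℕ) :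
    IntegrableOn (fun x : ℝ => A * x ^ n * exp (-(b * x ^ 2))) (Ioi 0) := by
  have h := (integrableOn_rpow_mul_exp_neg_mul_sq hb (s := n)
    (neg_one_lt_zero.trans_le n.cast_nonneg)).const_mul A
  simp only [rpow_natCast, neg_mul, ← mul_assoc] at h
  exact h

theorem integral_Ioi_pow_mul_exp_neg_mul_sq {b : ℝ} (hb : 0 < b) (n : ℕ) :
    ∫ x in Ioi (0 : ℝ), x ^ n * exp (-(b * x ^ 2)) =
      Gamma (((n : ℝ) + 1) / 2) / (2 * b ^ (((n : ℝ) + 1) / 2)) := by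
  have h := integral_rpow_mul_exp_neg_mul_rpow two_pos (neg_one_lt_zero.trans_le n.cast_nonneg) hb
  simp only [rpow_natCast, rpow_two, neg_mul, neg_div, rpow_neg hb.le] at h
  rw [h]
  ring

theorem integral_Ioi_mul_pow_mul_exp_neg_mul_sq_eq_one {A b : ℝ} (hb : 0 < b) (n : ℕ)
    (hA : A * Gamma (((n : ℝ) + 1) / 2) = 2 * b ^ (((n : ℝ) + 1) / 2)) :
    ∫ x in Ioi (0 : ℝ), A * x ^ n * exp (-(b * x ^ 2)) = 1 := by
  simp only [mul_assoc, integral_const_mul, integral_Ioi_pow_mul_exp_neg_mul_sq hb]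
  have : 0 < b ^ (((n : ℝ) + 1) / 2) := by positivity
  field_simp
  linarith

theorem rpow_nat_add_half {x : ℝ} (hx : 0 < x) (k : ℕ) :
    x ^ ((k : ℝ) + 1 / 2) = x ^ k * √x := by
  rw [rpow_add hx, rpow_natCast, sqrt_eq_rpow]

theorem Gamma_three_halves : Gamma (3 / 2) = √π / 2 := by
  rw [show (3 / 2 : ℝ) = 1 / 2 + 1 by norm_num, Gamma_add_one (by norm_num), Gamma_one_half_eq]
  ring

theorem Gamma_five_halves : Gamma (5 / 2) = 3 * √π / 4 := by
  rw [show (5 / 2 : ℝ) = 3 / 2 + 1 by norm_num, Gamma_add_one (by norm_num), Gamma_three_halves]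
  ring

theorem integral_Ioi_distance_densities_eq_one {lam : ℝ} (hlam : 0 < lam) :
    (∫ x in Ioi (0 : ℝ), 4 * π * lam ^ ((3 : ℝ) / 2) * x ^ 2 * exp (-(lam * π * x ^ 2)))
      = 1 ∧
    (∫ x in Ioi (0 : ℝ), 2 * lam ^ 2 * π ^ 2 * x ^ 3 * exp (-(lam * π * x ^ 2))) = 1 ∧
    (∫ x in Ioi (0 : ℝ),
      8 / 3 * π ^ 2 * lam ^ ((5 : ℝ) / 2) * x ^ 4 * exp (-(lam * π * x ^ 2))) = 1 := by
  have hb : 0 < lam * π := mul_pos hlam pi_pos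
  refine ⟨integral_Ioi_mul_pow_mul_exp_neg_mul_sq_eq_one hb 2 ?_,
    integral_Ioi_mul_pow_mul_exp_neg_mul_sq_eq_one hb 3 ?_,
    integral_Ioi_mul_pow_mul_exp_neg_mul_sq_eq_one hb 4 ?_⟩
  · have h : ((2 : ℕ) + 1) / 2 = ((1 : ℕ) : ℝ) + 1 / 2 := by norm_num
    rw [h, mul_rpow hlam.le pi_pos.le, rpow_nat_add_half pi_pos, ← h]
    norm_num [Gamma_three_halves]
    ring
  · norm_num
    ring
  · have h : ((4 : ℕ) + 1) / 2 = ((2 : ℕ) : ℝ) + 1 / 2 := by norm_num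
    rw [h, mul_rpow hlam.le pi_pos.le, rpow_nat_add_half pi_pos, ← h]
    norm_num [Gamma_five_halves]
    ring

/-- Likelihood-ratio dominations `H_V ≤_{lrd} R₁` and `H_I ≤_{lrd} H_{I'}`, and the implied
stochastic dominations: for all `λ > 0`,
(1) `h ↦ f_{R₁}(h)/f_{H_V}(h)` and `h ↦ f_{H_{I'}}(h)/f_{H_I}(h)` are strictly increasing on
`(0,∞)`;
(2) consequently, for all `t ≥ 0`, `∫_t^∞ f_{R₁} ≥ ∫_t^∞ f_{H_V}` and
`∫_t^∞ f_{H_{I'}} ≥ ∫_t^∞ f_{H_I}`. -/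
theorem stmt_16 (lam : ℝ) (hlam : 0 < lam) :
    StrictMonoOn (fun h : ℝ =>
        2 * lam ^ 2 * Real.pi ^ 2 * h ^ 3 * Real.exp (-(lam * Real.pi * h ^ 2)) /
          (4 * Real.pi * lam ^ ((3:ℝ)/2) * h ^ 2 * Real.exp (-(lam * Real.pi * h ^ 2))))
      (Ioi 0) ∧
    StrictMonoOn (fun h : ℝ =>
        8/3 * Real.pi ^ 2 * lam ^ ((5:ℝ)/2) * h ^ 4 * Real.exp (-(lam * Real.pi * h ^ 2)) /
          (4 * Real.pi * lam ^ ((3:ℝ)/2) * h ^ 2 * Real.exp (-(lam * Real.pi * h ^ 2))))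
      (Ioi 0) ∧
    (∀ t : ℝ, 0 ≤ t →
      (∫ h in Ioi t, 2 * lam ^ 2 * Real.pi ^ 2 * h ^ 3 * Real.exp (-(lam * Real.pi * h ^ 2))) ≥
        ∫ h in Ioi t,
          4 * Real.pi * lam ^ ((3:ℝ)/2) * h ^ 2 * Real.exp (-(lam * Real.pi * h ^ 2))) ∧
    ∀ t : ℝ, 0 ≤ t →
      (∫ h in Ioi t,
          8/3 * Real.pi ^ 2 * lam ^ ((5:ℝ)/2) * h ^ 4 * Real.exp (-(lam * Real.pi * h ^ 2))) ≥
        ∫ h in Ioi t,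
          4 * Real.pi * lam ^ ((3:ℝ)/2) * h ^ 2 * Real.exp (-(lam * Real.pi * h ^ 2)) := by
  have hb : 0 < lam * π := mul_pos hlam pi_pos
  obtain ⟨hV, hR₁, hI'⟩ := integral_Ioi_distance_densities_eq_one hlam
  have hV_pos (x : ℝ) (hx : x ∈ Ioi 0) :
      0 < 4 * π * lam ^ ((3 : ℝ) / 2) * x ^ 2 * exp (-(lam * π * x ^ 2)) := by
    have := mem_Ioi.1 hx
    positivity
  have hratio {A B : ℝ} {m : ℕ} (hA : 0 < A) (hB : 0 < B) (hm : 2 < m) :=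
    strictMonoOn_mul_pow_div_mul_pow hA hB hm _ fun x _ => (exp_pos (-(lam * π * x ^ 2))).ne'
  refine ⟨hratio (by positivity) (by positivity) (by norm_num),
    hratio (by positivity) (by positivity) (by norm_num), fun t ht => ?_, fun t ht => ?_⟩
  · exact setIntegral_Ioi_le_of_monotoneOn_div
      (integrableOn_Ioi_mul_pow_mul_exp_neg_mul_sq _ hb 2)
      (integrableOn_Ioi_mul_pow_mul_exp_neg_mul_sq _ hb 3) (hV.trans hR₁.symm) hV_pos
      (hratio (by positivity) (by positivity) (by norm_num)).monotoneOn ht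
  · exact setIntegral_Ioi_le_of_monotoneOn_div
      (integrableOn_Ioi_mul_pow_mul_exp_neg_mul_sq _ hb 2)
      (integrableOn_Ioi_mul_pow_mul_exp_neg_mul_sq _ hb 4) (hV.trans hI'.symm) hV_pos
      (hratio (by positivity) (by positivity) (by norm_num)).monotoneOn ht
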